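/- arXiv:1405.5414 — 4 statements merged into one kernel-verified Lean document; each statement's English description precedes it below -/
import Mathlib

section
/- For every ε > 0 there exists δ > 0 such that the following holds for every C*-algebra A: whenever u and v are partial isometries in A (u·u*·u = u and v·v*·v = v) satisfying 1 − δ < ‖u + v‖ < 1 + δ and 1 − δ < ‖u − v‖ < 1 + δ, one has ‖u − P₀(v)(u)‖ < ε and ‖v − P₀(u)(v)‖ < ε, where P₀(v)(x) = x − v·v*·x − x·v*·v + v·v*·x·v*·v is the Peirce-0 projection associated with v (and analogously for P₀(u)). -/
/-!
Write `p = u* u` and `q = v* v`. The parallelogram identity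
`(u + v)* (u + v) + (u - v)* (u - v) = 2 (p + q)` turns `‖u ± v‖ ≈ 1` into `‖p + q‖ ≲ 1`.
Compressing by `q` gives `‖q + q p q‖ ≤ ‖p + q‖`, and since `q` is a unit for the positive
element `q p q`, the number `1 + ‖q p q‖` lies in the spectrum of `q + q p q`, whence
`1 + ‖u q‖² = 1 + ‖q p q‖ ≤ ‖p + q‖`. So `u v* v` is small, and by symmetry under `star` so is
`v v* u`; these two control `u - P₀(v)(u)`.
-/

def IsPartialIsometry {R : Type*} [Mul R] [Star R] (u : R) : Prop := u * star u * u = u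

def peirceZero {A : Type*} [NonUnitalRing A] [Star A] (v x : A) : A :=
  x - v * star v * x - x * (star v * v) + v * star v * x * (star v * v)

namespace IsPartialIsometry

protected lemma map {R S F : Type*} [Mul R] [Star R] [Mul S] [Star S] [FunLike F R S]
    [MulHomClass F R S] [StarHomClass F R S] {u : R} (hu : IsPartialIsometry u) (f : F) :
    IsPartialIsometry (f u) := by
  rw [IsPartialIsometry, ← map_star, ← map_mul, ← map_mul, hu]

variable {R : Type*} [Semigroup R] [StarMul R] {u : R}

lemma isStarProjection_star_mul_self (hu : IsPartialIsometry u) :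
    IsStarProjection (star u * u) where
  isIdempotentElem := by rw [IsIdempotentElem, mul_assoc, ← mul_assoc u, hu]
  isSelfAdjoint := .star_mul_self u

protected lemma star (hu : IsPartialIsometry u) : IsPartialIsometry (star u) := by
  simpa [IsPartialIsometry, mul_assoc] using congrArg star hu

lemma isStarProjection_mul_star_self (hu : IsPartialIsometry u) :
    IsStarProjection (u * star u) := by
  simpa using hu.star.isStarProjection_star_mul_self

end IsPartialIsometry

/-- If `m = 1 + t - (q + a)` is invertible, then `q m⁻¹ + t⁻¹ (1 - q)` inverts `t - a`: the elements
`m` and `t - a` agree on the range of `q`, and on that of `1 - q` both act as scalars. -/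
lemma one_add_mem_spectrum_add_of_mul_eq {𝕜 A : Type*} [Field 𝕜] [Ring A] [Algebra 𝕜 A]
    {q a : A} (hq : IsIdempotentElem q) (hqa : q * a = a) (haq : a * q = a) {t : 𝕜} (ht : t ≠ 0)
    (hta : t ∈ spectrum 𝕜 a) : 1 + t ∈ spectrum 𝕜 (q + a) := by
  rw [spectrum.mem_iff] at hta ⊢
  rintro ⟨m, hm⟩
  apply hta
  set T := algebraMap 𝕜 A t
  set S := algebraMap 𝕜 A t⁻¹
  have hm' : (m : A) = (T - a) + (1 - q) := by rw [hm, map_add, map_one]; abel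
  have hTaq : (T - a) * q = T * q - a := by rw [sub_mul, haq]
  have hqTa : q * (T - a) = T * q - a := by rw [mul_sub, hqa, ← Algebra.commutes]
  have hmq : m * q = T * q - a := by rw [hm', add_mul, hq.one_sub_mul_self, add_zero, hTaq]
  have hqm : q * m = T * q - a := by rw [hm', mul_add, hq.mul_one_sub_self, add_zero, hqTa]
  have hcomm : Commute (↑m⁻¹ : A) q := Commute.units_inv_left (hmq.trans hqm.symm)
  have hTa : (T - a) * (1 - q) = T * (1 - q) := by rw [mul_sub, hTaq]; noncomm_ring
  have hTa' : (1 - q) * (T - a) = T * (1 - q) := by rw [sub_mul, hqTa]; noncomm_ring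
  have hST : S * T = 1 := by rw [← map_mul, inv_mul_cancel₀ ht, map_one]
  refine isUnit_iff_exists.mpr ⟨q * ↑m⁻¹ + S * (1 - q), ?_, ?_⟩
  · calc (T - a) * (q * ↑m⁻¹ + S * (1 - q))
        = (T - a) * q * ↑m⁻¹ + S * ((T - a) * (1 - q)) := by
          rw [mul_add, ← mul_assoc, ← mul_assoc (T - a) S, ← Algebra.commutes, mul_assoc _ (T - a)]
      _ = q * (m * ↑m⁻¹) + S * T * (1 - q) := by rw [hTaq, ← hqm, hTa, mul_assoc q, mul_assoc S]
      _ = 1 := by rw [Units.mul_inv, mul_one, hST, one_mul, add_sub_cancel]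
  · calc (q * ↑m⁻¹ + S * (1 - q)) * (T - a)
        = ↑m⁻¹ * (q * (T - a)) + S * ((1 - q) * (T - a)) := by
          rw [add_mul, ← hcomm.eq, mul_assoc, mul_assoc]
      _ = ↑m⁻¹ * (m * q) + S * T * (1 - q) := by rw [hqTa, ← hmq, hTa', mul_assoc]
      _ = 1 := by rw [← mul_assoc, Units.inv_mul, one_mul, hST, one_mul, add_sub_cancel]

lemma two_mul_norm_star_mul_self_add_le {E : Type*} [NonUnitalNormedRing E] [StarRing E]
    [CStarRing E] [NormedSpace ℝ E] (u v : E) :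
    2 * ‖star u * u + star v * v‖ ≤ ‖u + v‖ ^ 2 + ‖u - v‖ ^ 2 := by
  have hpar : star (u + v) * (u + v) + star (u - v) * (u - v) = 2 • (star u * u + star v * v) := by
    simp only [star_add, star_sub]; noncomm_ring
  calc 2 * ‖star u * u + star v * v‖ = ‖star (u + v) * (u + v) + star (u - v) * (u - v)‖ := by
        rw [hpar, RCLike.norm_nsmul ℝ, nsmul_eq_mul, Nat.cast_ofNat]
    _ ≤ _ := (norm_add_le _ _).trans_eq <| by
      rw [CStarRing.norm_star_mul_self, CStarRing.norm_star_mul_self, sq, sq]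

section StarOrdered

variable {B : Type*} [CStarAlgebra B] [PartialOrder B] [StarOrderedRing B]

lemma one_add_norm_le_norm_add_of_mul_eq {q a : B} (hq : IsIdempotentElem q) (ha : 0 ≤ a)
    (ha₀ : a ≠ 0) (hqa : q * a = a) (haq : a * q = a) : 1 + ‖a‖ ≤ ‖q + a‖ := by
  have : Nontrivial B := nontrivial_of_ne a 0 ha₀
  have hmem := one_add_mem_spectrum_add_of_mul_eq hq hqa haq (norm_ne_zero_iff.mpr ha₀)
    (CStarAlgebra.norm_mem_spectrum_of_nonneg ha)
  simpa [abs_of_nonneg (by positivity : (0 : ℝ) ≤ 1 + ‖a‖)] using spectrum.norm_le_norm_of_mem hmem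

lemma one_add_norm_mul_mul_le_norm_add {p q : B} (hp : IsStarProjection p)
    (hq : IsStarProjection q) (hpq : q * p * q ≠ 0) : 1 + ‖q * p * q‖ ≤ ‖p + q‖ := by
  have hq2 := hq.isIdempotentElem.eq
  have hnonneg : 0 ≤ q * p * q := by
    have : q * p * q = star (p * q) * (p * q) := by
      rw [star_mul, hp.isSelfAdjoint.star_eq, hq.isSelfAdjoint.star_eq,
        ← mul_assoc (q * p), mul_assoc q p p, hp.isIdempotentElem.eq]
    exact this ▸ star_mul_self_nonneg (p * q)
  calc 1 + ‖q * p * q‖ ≤ ‖q + q * p * q‖ :=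
        one_add_norm_le_norm_add_of_mul_eq hq.isIdempotentElem hnonneg hpq
          (by rw [← mul_assoc, ← mul_assoc, hq2]) (by rw [mul_assoc, hq2])
    _ = ‖q * (p + q) * q‖ := by rw [mul_add, add_mul, mul_assoc q q q, hq2, hq2, add_comm]
    _ ≤ ‖q‖ * ‖p + q‖ * ‖q‖ := norm_mul₃_le
    _ ≤ 1 * ‖p + q‖ * 1 := by gcongr <;> exact hq.norm_le
    _ = ‖p + q‖ := by ring

end StarOrdered

lemma IsPartialIsometry.one_add_norm_mul_star_mul_self_sq_le {B : Type*} [CStarAlgebra B] {u v : B}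
    (hu : IsPartialIsometry u) (hv : IsPartialIsometry v) (huv : u * (star v * v) ≠ 0) :
    1 + ‖u * (star v * v)‖ ^ 2 ≤ (‖u + v‖ ^ 2 + ‖u - v‖ ^ 2) / 2 := by
  let _ := CStarAlgebra.spectralOrder B
  let _ := CStarAlgebra.spectralOrderedRing B
  have hq := hv.isStarProjection_star_mul_self
  have hsq : ‖u * (star v * v)‖ ^ 2 = ‖star v * v * (star u * u) * (star v * v)‖ := by
    rw [sq, ← CStarRing.norm_star_mul_self, star_mul, hq.isSelfAdjoint.star_eq]
    simp only [mul_assoc]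
  have hne : star v * v * (star u * u) * (star v * v) ≠ 0 := by
    rw [← norm_ne_zero_iff, ← hsq]; exact pow_ne_zero 2 (norm_ne_zero_iff.mpr huv)
  have hcompress := one_add_norm_mul_mul_le_norm_add hu.isStarProjection_star_mul_self hq hne
  have hpar := two_mul_norm_star_mul_self_add_le u v
  rw [hsq]; linarith

section NonUnital

variable {A : Type*} [NonUnitalCStarAlgebra A] {u v : A}

lemma IsPartialIsometry.norm_mul_star_mul_self_sq_lt (hu : IsPartialIsometry u)
    (hv : IsPartialIsometry v) {r : ℝ} (hr : 0 < r) (hadd : ‖u + v‖ ^ 2 < 1 + r)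
    (hsub : ‖u - v‖ ^ 2 < 1 + r) : ‖u * (star v * v)‖ ^ 2 < r := by
  by_cases huv : u * (star v * v) = 0
  · simpa [huv] using hr
  have key := one_add_norm_mul_star_mul_self_sq_le (B := Unitization ℂ A) (u := u) (v := v)
    (hu.map (Unitization.inrNonUnitalStarAlgHom ℂ A))
    (hv.map (Unitization.inrNonUnitalStarAlgHom ℂ A))
    (by simpa [← Unitization.inr_star, ← Unitization.inr_mul] using
      (Unitization.inr_injective (R := ℂ)).ne huv)
  simp only [← Unitization.inr_star, ← Unitization.inr_mul, ← Unitization.inr_add,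
    ← Unitization.inr_sub, Unitization.norm_inr] at key
  linarith

lemma IsPartialIsometry.norm_sub_peirceZero_le (hv : IsPartialIsometry v) (x : A) :
    ‖x - peirceZero v x‖ ≤ ‖v * star v * x‖ + 2 * ‖x * (star v * v)‖ := by
  have hx : x - peirceZero v x = v * star v * x + x * (star v * v) -
      v * star v * (x * (star v * v)) := by
    rw [peirceZero]; noncomm_ring
  have hproj : ‖v * star v * (x * (star v * v))‖ ≤ ‖x * (star v * v)‖ :=
    norm_mul_le_of_le hv.isStarProjection_mul_star_self.norm_le le_rfl |>.trans_eq (one_mul _)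
  rw [hx]
  linarith [norm_sub_le (v * star v * x + x * (star v * v)) (v * star v * (x * (star v * v))),
    norm_add_le (v * star v * x) (x * (star v * v))]

lemma IsPartialIsometry.norm_sub_peirceZero_lt (hu : IsPartialIsometry u)
    (hv : IsPartialIsometry v) {ε : ℝ} (hε : 0 < ε) (hadd : ‖u + v‖ ^ 2 < 1 + (ε / 3) ^ 2)
    (hsub : ‖u - v‖ ^ 2 < 1 + (ε / 3) ^ 2) : ‖u - peirceZero v u‖ < ε := by
  have hε3 : 0 < (ε / 3) ^ 2 := by positivity
  have hright : ‖u * (star v * v)‖ < ε / 3 :=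
    lt_of_pow_lt_pow_left₀ 2 (by positivity) (hu.norm_mul_star_mul_self_sq_lt hv hε3 hadd hsub)
  have hleft : ‖v * star v * u‖ < ε / 3 := by
    have h := hu.star.norm_mul_star_mul_self_sq_lt hv.star hε3
      (by rwa [← star_add, norm_star]) (by rwa [← star_sub, norm_star])
    rw [star_star, ← norm_star] at h
    simp only [star_mul, star_star, mul_assoc] at h ⊢
    exact lt_of_pow_lt_pow_left₀ 2 (by positivity) h
  linarith [hv.norm_sub_peirceZero_le u]

end NonUnital

/-- Quantitative version of M-orthogonality of tripotents (partial
isometries in the C*-algebra case): for every `ε > 0` there is `δ > 0`, uniform over all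
C*-algebras, such that for partial isometries `u, v` with `1 - δ < ‖u ± v‖ < 1 + δ`, one has
`‖u - P₀(v)(u)‖ < ε` and `‖v - P₀(u)(v)‖ < ε`, where
`P₀(v)(x) = x - v v* x - x v* v + v v* x v* v` is the Peirce-0 projection. -/
theorem quantitative_m_orthogonality_partial_isometries :
    ∀ ε > (0 : ℝ), ∃ δ > (0 : ℝ),
      ∀ (A : Type u) [inst : NonUnitalCStarAlgebra A] (u v : A),
        u * star u * u = u → v * star v * v = v →
        1 - δ < ‖u + v‖ → ‖u + v‖ < 1 + δ →
        1 - δ < ‖u - v‖ → ‖u - v‖ < 1 + δ →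
        ‖u - (u - v * star v * u - u * (star v * v) + v * star v * u * (star v * v))‖ < ε ∧
        ‖v - (v - u * star u * v - v * (star u * u) + u * star u * v * (star u * u))‖ < ε := by
  intro ε hε
  refine ⟨min 1 (ε ^ 2 / 27), by positivity, ?_⟩
  intro A _ u v hu hv _ hadd _ hsub
  have hsq {x : A} (hx : ‖x‖ < 1 + min 1 (ε ^ 2 / 27)) : ‖x‖ ^ 2 < 1 + (ε / 3) ^ 2 := by
    have h₁ := min_le_left 1 (ε ^ 2 / 27)
    have h₂ := min_le_right 1 (ε ^ 2 / 27)
    nlinarith [norm_nonneg x]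
  exact ⟨IsPartialIsometry.norm_sub_peirceZero_lt hu hv hε (hsq hadd) (hsq hsub),
    IsPartialIsometry.norm_sub_peirceZero_lt hv hu hε (add_comm u v ▸ hsq hadd)
      (norm_sub_rev u v ▸ hsq hsub)⟩
end

section
/- For every ε > 0 and every natural number n ≥ 1 there exists δ = δ(n, ε) > 0 such that the following holds for every σ-finite measure space (Ω, Σ, μ): whenever φ₁, …, φₙ ∈ L¹(μ, ℂ) satisfy ∑_{j=1}^n |α_j| ≥ ‖∑_{j=1}^n α_j φ_j‖₁ ≥ (1 − δ) ∑_{j=1}^n |α_j| for all complex numbers α₁, …, αₙ, then (i) there exist a₁, …, aₙ ∈ L∞(μ, ℂ) with ‖a_j‖_∞ = 1, a_i·a_j = 0 μ-almost everywhere for i ≠ j, and Re ∫ a_j·φ_j dμ > 1 − ε for every j, and (ii) there exist φ̃₁, …, φ̃ₙ ∈ L¹(μ, ℂ) with ‖φ̃_j‖₁ = 1, φ̃_i·φ̃_j = 0 μ-almost everywhere for i ≠ j, and ‖φ_j − φ̃_j‖₁ < ε for every j. -/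
/-!
The pointwise inequality `min |u| |v| + |u + v| + |u - v| ≤ 2 (|u| + |v|)`, a consequence of the
parallelogram law, integrates to `∫ min (|f|, |g|) ≤ 2 (‖f‖₁ + ‖g‖₁) - ‖f + g‖₁ - ‖f - g‖₁`.
Testing the lower `ℓ₁` estimate on `φᵢ ± φⱼ` therefore gives `∫ min (|φᵢ|, |φⱼ|) ≤ 4δ` for `i ≠ j`.
Split `Ω` into the disjoint cells `Aⱼ` where `|φⱼ|` is the largest of the `|φᵢ|` (ties going to the
least index): off `Aⱼ` the function `|φⱼ|` is dominated by `∑ᵢ≠ⱼ min (|φᵢ|, |φⱼ|)`, so `𝟙_{Aⱼ} φⱼ`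
carries all but `4δ(n - 1)` of the mass of `φⱼ`. Normalising `𝟙_{Aⱼ} φⱼ` gives `φ̃ⱼ`, and the
conjugate phase of `φⱼ` on `Aⱼ` gives `aⱼ`, with `∫ aⱼ φⱼ = ‖𝟙_{Aⱼ} φⱼ‖₁`.
-/

open MeasureTheory Complex Finset Function
open scoped ENNReal

universe u

/- With `a = ‖u‖ ≥ b = ‖v‖`: `(‖u + v‖ + ‖u - v‖)² ≤ 2 (‖u + v‖² + ‖u - v‖²) = 4 (a² + b²)
≤ (2a + b)²`. -/
theorem min_norm_add_norm_add_add_norm_sub_le {E : Type*} [NormedAddCommGroup E]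
    [InnerProductSpace ℝ E] (u v : E) :
    min ‖u‖ ‖v‖ + ‖u + v‖ + ‖u - v‖ ≤ 2 * (‖u‖ + ‖v‖) := by
  have hpar := parallelogram_law_with_norm ℝ u v
  have hu := norm_nonneg u
  have hv := norm_nonneg v
  have hs := norm_nonneg (u + v)
  have ht := norm_nonneg (u - v)
  rcases le_total ‖u‖ ‖v‖ with h | h
  · rw [min_eq_left h]
    nlinarith [sq_nonneg (‖u + v‖ - ‖u - v‖)]
  · rw [min_eq_right h]
    nlinarith [sq_nonneg (‖u + v‖ - ‖u - v‖)]

section EllOneBounds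
variable {ι 𝕜 V : Type*} [Fintype ι] [DecidableEq ι] [RCLike 𝕜] [NormedAddCommGroup V]
  [NormedSpace 𝕜 V] {φ : ι → V}

theorem norm_le_one_of_forall_norm_sum_smul_le
    (h : ∀ α : ι → 𝕜, ‖∑ j, α j • φ j‖ ≤ ∑ j, ‖α j‖) (j : ι) : ‖φ j‖ ≤ 1 := by
  simpa [Pi.single_apply, apply_ite] using h (Pi.single j 1)

theorem one_sub_le_norm_of_forall_le_norm_sum_smul {δ : ℝ}
    (h : ∀ α : ι → 𝕜, (1 - δ) * ∑ j, ‖α j‖ ≤ ‖∑ j, α j • φ j‖) (j : ι) : 1 - δ ≤ ‖φ j‖ := by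
  simpa [Pi.single_apply, apply_ite] using h (Pi.single j 1)

theorem two_mul_one_sub_le_norm_add_smul_of_forall_le_norm_sum_smul {δ : ℝ}
    (h : ∀ α : ι → 𝕜, (1 - δ) * ∑ j, ‖α j‖ ≤ ‖∑ j, α j • φ j‖) {i j : ι} (hij : i ≠ j)
    {c : 𝕜} (hc : ‖c‖ = 1) : 2 * (1 - δ) ≤ ‖φ i + c • φ j‖ := by
  have hα := h (Pi.single i 1 + Pi.single j c)
  rw [Fintype.sum_eq_add i j hij fun k ⟨hki, hkj⟩ => by simp [hki, hkj],
    Fintype.sum_eq_add i j hij fun k ⟨hki, hkj⟩ => by simp [hki, hkj]] at hα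
  simp only [Pi.add_apply, Pi.single_eq_same, Pi.single_eq_of_ne hij, Pi.single_eq_of_ne hij.symm,
    add_zero, zero_add, one_smul, norm_one, hc] at hα
  linarith
end EllOneBounds

section FirstArgmax
variable {Ω ι : Type*} [LinearOrder ι] (F : ι → Ω → ℝ)

def firstArgmaxSet (j : ι) : Set Ω := {x | ∀ i, F i x ≤ F j x ∧ (i < j → F i x < F j x)}

theorem pairwise_disjoint_firstArgmaxSet : Pairwise (Disjoint on (firstArgmaxSet F)) := by
  intro i j hij
  refine Set.disjoint_left.mpr fun x hi hj => ?_
  rcases hij.lt_or_gt with h | h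
  · exact (hi j).1.not_gt ((hj i).2 h)
  · exact (hj i).1.not_gt ((hi j).2 h)

theorem exists_mem_firstArgmaxSet [Fintype ι] [Nonempty ι] (x : Ω) :
    ∃ j, x ∈ firstArgmaxSet F j := by
  classical
  let S := univ.filter fun j => ∀ i, F i x ≤ F j x
  obtain ⟨j₀, -, hj₀⟩ := exists_max_image univ (F · x) univ_nonempty
  have hS : S.Nonempty := ⟨j₀, by simpa [S] using hj₀⟩
  have hmax : ∀ i, F i x ≤ F (S.min' hS) x := by simpa [S] using S.min'_mem hS
  refine ⟨S.min' hS, fun i => ⟨hmax i, fun hi => ?_⟩⟩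
  have hiS : i ∉ S := fun h => (S.min'_le i h).not_gt hi
  obtain ⟨k, hk⟩ : ∃ k, F i x < F k x := by simpa [S] using hiS
  exact hk.trans_le (hmax k)

theorem measurableSet_firstArgmaxSet [Countable ι] [MeasurableSpace Ω]
    (hF : ∀ i, Measurable (F i)) (j : ι) : MeasurableSet (firstArgmaxSet F j) := by
  refine measurableSet_setOfPred.mpr (Measurable.forall fun i => ?_)
  exact (measurableSet_setOfPred.mp (measurableSet_le (hF i) (hF j))).and
    (measurable_const.imp (measurableSet_setOfPred.mp (measurableSet_lt (hF i) (hF j))))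

theorem indicator_compl_firstArgmaxSet_le_sum_min [Fintype ι] (hF : ∀ i x, 0 ≤ F i x) (j : ι)
    (x : Ω) :
    (firstArgmaxSet F j)ᶜ.indicator (F j) x ≤ ∑ i ∈ univ.erase j, min (F i x) (F j x) := by
  have : Nonempty ι := ⟨j⟩
  by_cases hx : x ∈ firstArgmaxSet F j
  · rw [Set.indicator_of_notMem (Set.notMem_compl_iff.mpr hx)]
    exact sum_nonneg fun i _ => le_min (hF i x) (hF j x)
  · obtain ⟨i, hi⟩ := exists_mem_firstArgmaxSet F x
    have hij : i ≠ j := by rintro rfl; exact hx hi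
    rw [Set.indicator_of_mem hx]
    refine (min_eq_right (hi j).1).symm.trans_le ?_
    exact single_le_sum (f := fun k => min (F k x) (F j x))
      (fun k _ => le_min (hF k x) (hF j x)) (mem_erase.mpr ⟨hij, mem_univ i⟩)
end FirstArgmax

theorem exp_neg_arg_mul_I_mul_self (z : ℂ) : exp (↑(-arg z) * I) * z = ‖z‖ := by
  calc exp (↑(-arg z) * I) * z = exp (↑(-arg z) * I) * (‖z‖ * exp (arg z * I)) := by
        rw [norm_mul_exp_arg_mul_I]
    _ = ‖z‖ := by
        rw [mul_left_comm, ← exp_add, ofReal_neg, neg_mul, neg_add_cancel, exp_zero, mul_one]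

theorem norm_sub_normalize_le {V : Type*} [NormedAddCommGroup V] [NormedSpace ℝ V] (u v : V)
    (hv : ‖v‖ ≤ 1) : ‖u - NormedSpace.normalize v‖ ≤ ‖u - v‖ + (1 - ‖v‖) := by
  have hsplit : u - NormedSpace.normalize v = (u - v) + (‖v‖ - 1) • NormedSpace.normalize v := by
    rw [sub_smul, NormedSpace.norm_smul_normalize, one_smul]; abel
  have hnormalize : ‖NormedSpace.normalize v‖ ≤ 1 := by
    by_cases h : v = 0
    · simp [h]
    · exact (NormedSpace.norm_normalize h).le
  calc ‖u - NormedSpace.normalize v‖ ≤ ‖u - v‖ + |‖v‖ - 1| * ‖NormedSpace.normalize v‖ := by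
        rw [hsplit, ← Real.norm_eq_abs, ← norm_smul]; exact norm_add_le _ _
    _ ≤ ‖u - v‖ + (1 - ‖v‖) := by
        rw [abs_of_nonpos (by linarith)]
        nlinarith

theorem ae_mul_eq_zero_of_disjoint {Ω R : Type*} [MeasurableSpace Ω] {μ : Measure Ω}
    [MulZeroClass R] {F G : Ω → R} {s t : Set Ω} (hst : Disjoint s t)
    (hF : ∀ᵐ x ∂μ, x ∉ s → F x = 0) (hG : ∀ᵐ x ∂μ, x ∉ t → G x = 0) :
    ∀ᵐ x ∂μ, F x * G x = 0 := by
  filter_upwards [hF, hG] with x hFx hGx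
  by_cases hxs : x ∈ s
  · rw [hGx (Set.disjoint_left.mp hst hxs), mul_zero]
  · rw [hFx hxs, zero_mul]

namespace MeasureTheory

variable {Ω E : Type*} [MeasurableSpace Ω] {μ : Measure Ω} [NormedAddCommGroup E]

theorem L1.norm_add_eq_integral (f g : Lp E 1 μ) : ‖f + g‖ = ∫ x, ‖f x + g x‖ ∂μ := by
  rw [L1.norm_eq_integral_norm]
  exact integral_congr_ae ((Lp.coeFn_add f g).mono fun x hx => by simp only [hx, Pi.add_apply])

theorem L1.norm_sub_eq_integral (f g : Lp E 1 μ) : ‖f - g‖ = ∫ x, ‖f x - g x‖ ∂μ := by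
  rw [L1.norm_eq_integral_norm]
  exact integral_congr_ae ((Lp.coeFn_sub f g).mono fun x hx => by simp only [hx, Pi.sub_apply])

theorem L1.integral_min_norm_add_norm_add_add_norm_sub_le [InnerProductSpace ℝ E]
    (f g : Lp E 1 μ) :
    ∫ x, min ‖f x‖ ‖g x‖ ∂μ + ‖f + g‖ + ‖f - g‖ ≤ 2 * (‖f‖ + ‖g‖) := by
  have hf := (L1.integrable_coeFn f).norm
  have hg := (L1.integrable_coeFn g).norm
  have hmin : Integrable (fun x => min ‖f x‖ ‖g x‖) μ := hf.inf hg
  have hadd : Integrable (fun x => ‖f x + g x‖) μ :=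
    ((L1.integrable_coeFn f).add (L1.integrable_coeFn g)).norm
  have hsub : Integrable (fun x => ‖f x - g x‖) μ :=
    ((L1.integrable_coeFn f).sub (L1.integrable_coeFn g)).norm
  have hmin_add : Integrable (fun x => min ‖f x‖ ‖g x‖ + ‖f x + g x‖) μ := hmin.add hadd
  calc ∫ x, min ‖f x‖ ‖g x‖ ∂μ + ‖f + g‖ + ‖f - g‖
      = ∫ x, (min ‖f x‖ ‖g x‖ + ‖f x + g x‖ + ‖f x - g x‖) ∂μ := by
        rw [MeasureTheory.integral_add hmin_add hsub, MeasureTheory.integral_add hmin hadd,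
          L1.norm_add_eq_integral, L1.norm_sub_eq_integral]
    _ ≤ ∫ x, 2 * (‖f x‖ + ‖g x‖) ∂μ :=
        integral_mono (hmin_add.add hsub) ((hf.add hg).const_mul 2)
          fun x => min_norm_add_norm_add_add_norm_sub_le (f x) (g x)
    _ = 2 * (‖f‖ + ‖g‖) := by
        rw [integral_const_mul, MeasureTheory.integral_add hf hg, L1.norm_eq_integral_norm f,
          L1.norm_eq_integral_norm g]

variable {p : ℝ≥0∞} {s : Set Ω}

noncomputable def Lp.indicator (f : Lp E p μ) (hs : MeasurableSet s) : Lp E p μ :=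
  ((Lp.memLp f).indicator hs).toLp _

theorem Lp.coeFn_indicator (f : Lp E p μ) (hs : MeasurableSet s) :
    Lp.indicator f hs =ᵐ[μ] s.indicator f :=
  MemLp.coeFn_toLp _

theorem L1.norm_indicator (f : Lp E 1 μ) (hs : MeasurableSet s) :
    ‖Lp.indicator f hs‖ = ∫ x in s, ‖f x‖ ∂μ := by
  rw [L1.norm_eq_integral_norm, ← integral_indicator hs]
  refine integral_congr_ae ((Lp.coeFn_indicator f hs).mono fun x hx => ?_)
  simp only [hx, norm_indicator_eq_indicator_norm]

theorem L1.norm_sub_indicator (f : Lp E 1 μ) (hs : MeasurableSet s) :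
    ‖f - Lp.indicator f hs‖ = ∫ x in sᶜ, ‖f x‖ ∂μ := by
  rw [L1.norm_sub_eq_integral, ← integral_indicator hs.compl]
  refine integral_congr_ae ((Lp.coeFn_indicator f hs).mono fun x hx => ?_)
  by_cases hxs : x ∈ s <;> simp [hx, hxs]

theorem L1.norm_indicator_add_norm_sub_indicator (f : Lp E 1 μ) (hs : MeasurableSet s) :
    ‖Lp.indicator f hs‖ + ‖f - Lp.indicator f hs‖ = ‖f‖ := by
  rw [L1.norm_indicator, L1.norm_sub_indicator, L1.norm_eq_integral_norm,
    integral_add_compl hs (L1.integrable_coeFn f).norm]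

theorem Lp.ae_eq_zero_of_notMem_indicator (f : Lp E p μ) (hs : MeasurableSet s) :
    ∀ᵐ x ∂μ, x ∉ s → Lp.indicator f hs x = 0 :=
  (Lp.coeFn_indicator f hs).mono fun x hx hxs => by rw [hx, Set.indicator_of_notMem hxs]

theorem Lp.ae_eq_zero_of_notMem_normalize_indicator [NormedSpace ℝ E] [Fact (1 ≤ p)]
    (f : Lp E p μ) (hs : MeasurableSet s) :
    ∀ᵐ x ∂μ, x ∉ s → NormedSpace.normalize (Lp.indicator f hs) x = 0 := by
  filter_upwards [Lp.coeFn_smul ‖Lp.indicator f hs‖⁻¹ (Lp.indicator f hs),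
    Lp.ae_eq_zero_of_notMem_indicator f hs] with x hx hzero hxs
  rw [NormedSpace.normalize, hx, Pi.smul_apply, hzero hxs, smul_zero]

theorem L1.norm_sub_normalize_indicator_le [NormedSpace ℝ E] (f : Lp E 1 μ)
    (hs : MeasurableSet s) (hf : ‖f‖ ≤ 1) :
    ‖f - NormedSpace.normalize (Lp.indicator f hs)‖ ≤ 2 * ‖f - Lp.indicator f hs‖ + (1 - ‖f‖) := by
  have hsplit := L1.norm_indicator_add_norm_sub_indicator f hs
  have := norm_sub_normalize_le f (Lp.indicator f hs)
    (by linarith [norm_nonneg (f - Lp.indicator f hs)])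
  linarith

theorem L1.exists_norm_eq_one_integral_mul_eq_norm_indicator (f : Lp ℂ 1 μ)
    (hs : MeasurableSet s) (hf : Lp.indicator f hs ≠ 0) :
    ∃ a : Lp ℂ ∞ μ, ‖a‖ = 1 ∧ (∀ᵐ x ∂μ, x ∉ s → a x = 0) ∧
      ∫ x, a x * f x ∂μ = ‖Lp.indicator f hs‖ := by
  have hμs : μ s ≠ 0 := fun h => hf <| norm_eq_zero.mp <| by
    rw [L1.norm_indicator, Measure.restrict_eq_zero.mpr h, integral_zero_measure]
  set g : Ω → ℂ := s.indicator fun x => exp (↑(-arg (f x)) * I)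
  have hg_meas : Measurable g :=
    (by fun_prop : Measurable fun x => exp (↑(-arg (f x)) * I)).indicator hs
  have hg_norm : ∀ x, ‖g x‖ = ‖s.indicator (fun _ => (1 : ℝ)) x‖ := fun x => by
    by_cases hx : x ∈ s
    · simp only [g, Set.indicator_of_mem hx, norm_exp_ofReal_mul_I, norm_one]
    · simp [g, hx]
  have hg : MemLp g ∞ μ := memLp_top_of_bound hg_meas.aestronglyMeasurable 1
    (ae_of_all _ fun x => by rw [hg_norm]; by_cases hx : x ∈ s <;> simp [hx])
  refine ⟨hg.toLp g, ?_, ?_, ?_⟩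
  · rw [Lp.norm_toLp, eLpNorm_congr_norm_ae (ae_of_all _ hg_norm),
      eLpNorm_indicator_const' hs hμs ENNReal.top_ne_zero]
    simp
  · filter_upwards [hg.coeFn_toLp] with x hx hxs
    simp only [hx, g, Set.indicator_of_notMem hxs]
  · calc ∫ x, hg.toLp g x * f x ∂μ = ∫ x, ((s.indicator (fun x => ‖f x‖) x : ℝ) : ℂ) ∂μ :=
          integral_congr_ae <| hg.coeFn_toLp.mono fun x hx => by
            by_cases hxs : x ∈ s
            · simp only [hx, g, Set.indicator_of_mem hxs, exp_neg_arg_mul_I_mul_self]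
            · simp only [hx, g, Set.indicator_of_notMem hxs, zero_mul, ofReal_zero]
      _ = ‖Lp.indicator f hs‖ := by
          rw [integral_complex_ofReal, integral_indicator hs, L1.norm_indicator]

theorem L1.exists_pairwise_ae_orthogonal_re_integral_mul_eq_norm_indicator {ι : Type*}
    {A : ι → Set Ω} (φ : ι → Lp ℂ 1 μ) (hA : ∀ j, MeasurableSet (A j))
    (hdisj : Pairwise (Disjoint on A)) (hne : ∀ j, Lp.indicator (φ j) (hA j) ≠ 0) :
    ∃ a : ι → Lp ℂ ∞ μ, (∀ j, ‖a j‖ = 1) ∧ (∀ i j, i ≠ j → ∀ᵐ x ∂μ, a i x * a j x = 0) ∧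
      ∀ j, (∫ x, a j x * φ j x ∂μ).re = ‖Lp.indicator (φ j) (hA j)‖ := by
  choose a ha using fun j =>
    L1.exists_norm_eq_one_integral_mul_eq_norm_indicator (φ j) (hA j) (hne j)
  refine ⟨a, fun j => (ha j).1,
    fun i j hij => ae_mul_eq_zero_of_disjoint (hdisj hij) (ha i).2.1 (ha j).2.1, fun j => ?_⟩
  rw [(ha j).2.2, ofReal_re]

theorem L1.integral_min_norm_le_of_forall_norm_sum_smul_bounds {ι 𝕜 : Type*} [Fintype ι]
    [DecidableEq ι] [RCLike 𝕜] [InnerProductSpace ℝ E] [NormedSpace 𝕜 E] {φ : ι → Lp E 1 μ}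
    {δ : ℝ} (hupper : ∀ α : ι → 𝕜, ‖∑ j, α j • φ j‖ ≤ ∑ j, ‖α j‖)
    (hlower : ∀ α : ι → 𝕜, (1 - δ) * ∑ j, ‖α j‖ ≤ ‖∑ j, α j • φ j‖) {i j : ι} (hij : i ≠ j) :
    ∫ x, min ‖φ i x‖ ‖φ j x‖ ∂μ ≤ 4 * δ := by
  have hadd := two_mul_one_sub_le_norm_add_smul_of_forall_le_norm_sum_smul hlower hij norm_one
  have hsub := two_mul_one_sub_le_norm_add_smul_of_forall_le_norm_sum_smul hlower hij
    (c := -1) (by rw [norm_neg, norm_one])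
  rw [one_smul] at hadd
  rw [neg_one_smul, ← sub_eq_add_neg] at hsub
  linarith [L1.integral_min_norm_add_norm_add_add_norm_sub_le (φ i) (φ j),
    norm_le_one_of_forall_norm_sum_smul_le hupper i,
    norm_le_one_of_forall_norm_sum_smul_le hupper j]

theorem L1.exists_pairwise_disjoint_norm_sub_indicator_le {ι : Type*} [Fintype ι] [LinearOrder ι]
    {φ : ι → Lp E 1 μ} {η : ℝ} (hmin : ∀ i j, i ≠ j → ∫ x, min ‖φ i x‖ ‖φ j x‖ ∂μ ≤ η) :
    ∃ (A : ι → Set Ω) (hA : ∀ j, MeasurableSet (A j)), Pairwise (Disjoint on A) ∧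
      ∀ j, ‖φ j - Lp.indicator (φ j) (hA j)‖ ≤ (Fintype.card ι - 1) * η := by
  let F : ι → Ω → ℝ := fun i x => ‖φ i x‖
  have hF : ∀ i, Measurable (F i) := fun i => (Lp.stronglyMeasurable (φ i)).norm.measurable
  have hA := measurableSet_firstArgmaxSet F hF
  refine ⟨firstArgmaxSet F, hA, pairwise_disjoint_firstArgmaxSet F, fun j => ?_⟩
  have hint : ∀ i, Integrable (fun x => min (F i x) (F j x)) μ := fun i =>
    (L1.integrable_coeFn (φ i)).norm.inf (L1.integrable_coeFn (φ j)).norm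
  rw [L1.norm_sub_indicator, ← integral_indicator (hA j).compl]
  calc ∫ x, (firstArgmaxSet F j)ᶜ.indicator (F j) x ∂μ
      ≤ ∫ x, ∑ i ∈ univ.erase j, min (F i x) (F j x) ∂μ :=
        integral_mono ((L1.integrable_coeFn (φ j)).norm.indicator (hA j).compl)
          (integrable_finsetSum _ fun i _ => hint i)
          (indicator_compl_firstArgmaxSet_le_sum_min F (fun i x => norm_nonneg _) j)
    _ = ∑ i ∈ univ.erase j, ∫ x, min (F i x) (F j x) ∂μ :=
        integral_finsetSum _ fun i _ => hint i
    _ ≤ ∑ i ∈ univ.erase j, η := sum_le_sum fun i hi => hmin i j (ne_of_mem_erase hi)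
    _ = (Fintype.card ι - 1) * η := by
        rw [sum_const, card_erase_of_mem (mem_univ j), card_univ, nsmul_eq_mul,
          Nat.cast_sub (Fintype.card_pos_iff.mpr ⟨j⟩), Nat.cast_one]

end MeasureTheory

/-- Commutative instance of the quantitative perturbation of `ℓ₁(n)`-copies
in preduals of JBW*-triples: for every `ε > 0` and `n ≥ 1` there is `δ = δ(n, ε) > 0`,
uniform over all σ-finite measure spaces, such that whenever `φ₁, …, φₙ ∈ L¹(μ, ℂ)` span
`ℓ₁(n)` `(1 - δ)`-isomorphically, then (i) there are norm-one `a₁, …, aₙ ∈ L∞(μ, ℂ)` with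
`aᵢ aⱼ = 0` a.e. for `i ≠ j` and `Re ∫ aⱼ φⱼ dμ > 1 - ε`, and (ii) there are norm-one
pairwise a.e. orthogonal `φ̃₁, …, φ̃ₙ ∈ L¹(μ, ℂ)` with `‖φⱼ - φ̃ⱼ‖₁ < ε`. -/
theorem quantitative_l_orthogonality_L1 :
    ∀ ε > (0 : ℝ), ∀ n : ℕ, 1 ≤ n → ∃ δ > (0 : ℝ),
      ∀ (Ω : Type u) [inst : MeasurableSpace Ω] (μ : Measure Ω) [SigmaFinite μ]
        (φ : Fin n → Lp ℂ 1 μ),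
        (∀ α : Fin n → ℂ,
          ‖∑ j, α j • φ j‖ ≤ ∑ j, ‖α j‖ ∧
          (1 - δ) * ∑ j, ‖α j‖ ≤ ‖∑ j, α j • φ j‖) →
        (∃ a : Fin n → Lp ℂ ⊤ μ,
          (∀ j, ‖a j‖ = 1) ∧
          (∀ i j, i ≠ j → ∀ᵐ x ∂μ, (a i) x * (a j) x = 0) ∧
          (∀ j, 1 - ε < (∫ x, (a j) x * (φ j) x ∂μ).re)) ∧
        (∃ ψ : Fin n → Lp ℂ 1 μ,
          (∀ j, ‖ψ j‖ = 1) ∧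
          (∀ i j, i ≠ j → ∀ᵐ x ∂μ, (ψ i) x * (ψ j) x = 0) ∧
          (∀ j, ‖φ j - ψ j‖ < ε)) := by
  intro ε hε n hn
  have hm : 0 < min ε 1 := lt_min hε one_pos
  have hn' : (0 : ℝ) < n := by exact_mod_cast hn
  refine ⟨min ε 1 / (8 * n), by positivity, fun Ω _ μ _ φ hφ => ?_⟩
  set δ := min ε 1 / (8 * n)
  have hδ : 0 < δ := by positivity
  have hδn : δ * (8 * n) = min ε 1 := div_mul_cancel₀ _ (by positivity)
  have hupper := fun α => (hφ α).1
  have hlower := fun α => (hφ α).2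
  obtain ⟨A, hA, hdisj, htail⟩ := L1.exists_pairwise_disjoint_norm_sub_indicator_le
    fun i j hij => L1.integral_min_norm_le_of_forall_norm_sum_smul_bounds hupper hlower hij
  simp only [Fintype.card_fin] at htail
  have hmass : ∀ j, 1 - min ε 1 < ‖Lp.indicator (φ j) (hA j)‖ := fun j => by
    linarith [L1.norm_indicator_add_norm_sub_indicator (φ j) (hA j),
      one_sub_le_norm_of_forall_le_norm_sum_smul hlower j, htail j]
  have hne : ∀ j, Lp.indicator (φ j) (hA j) ≠ 0 := fun j =>
    norm_pos_iff.mp (by linarith [hmass j, min_le_right ε 1])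
  constructor
  · obtain ⟨a, ha, hortho, hre⟩ :=
      L1.exists_pairwise_ae_orthogonal_re_integral_mul_eq_norm_indicator φ hA hdisj hne
    exact ⟨a, ha, hortho, fun j => by linarith [hre j, hmass j, min_le_left ε 1]⟩
  · refine ⟨fun j => NormedSpace.normalize (Lp.indicator (φ j) (hA j)),
      fun j => NormedSpace.norm_normalize (hne j),
      fun i j hij => ae_mul_eq_zero_of_disjoint (hdisj hij)
        (Lp.ae_eq_zero_of_notMem_normalize_indicator _ _)
        (Lp.ae_eq_zero_of_notMem_normalize_indicator _ _), fun j => ?_⟩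
    linarith [L1.norm_sub_normalize_indicator_le (φ j) (hA j)
      (norm_le_one_of_forall_norm_sum_smul_le hupper j),
      one_sub_le_norm_of_forall_le_norm_sum_smul hlower j, htail j, min_le_left ε 1]
end

section
/- Let (Ω, Σ, μ) be a σ-finite measure space and let (φ_m)_{m∈ℕ} be a sequence in L¹(μ, ℂ) with ‖φ_m‖₁ = 1 for all m which spans ℓ1 almost isometrically, i.e. there is a sequence (δ_m) of reals with 0 ≤ δ_m and δ_m → 0 such that ‖∑_{n≥m} α_n φ_n‖₁ ≥ (1 − δ_m) ∑_{n≥m} |α_n| for every m and every finitely supported family of complex scalars (α_n)_{n≥m}. Then there exist a strictly increasing sequence (m_n) of natural numbers and a sequence (φ̃_n) in L¹(μ, ℂ) with φ̃_n·φ̃_k = 0 μ-almost everywhere whenever n ≠ k, such that ‖φ_{m_n} − φ̃_n‖₁ → 0 as n → ∞. -/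
/-!
For unimodular `θ`, the `ℓ¹` estimate bounds `∫ (|φ i| + |φ j| - |φ i + θ φ j|)` by `2 δ m`,
and pointwise one of the four rotations `θ = I ^ k` already makes
`|a + θ b| ≤ |a| + |b| - min(|a|, |b|) / 2`; hence late terms have overlaps
`∫ min(|φ i|, |φ j|) = O(δ m)`. As
`∑_{i ∈ s} min(|φ i|, |φ k|) ≤ |φ k| + ∑_{i ≠ j ∈ s} min(|φ i|, |φ j|)`,
many terms with overlap `≥ ε` against a fixed `φ k` would contradict this, so these overlaps tend
to `0` and a subsequence has pairwise overlaps at most `2⁻ⁿ 2⁻ᵏ`. Restricting each `φ (m n)` to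
the set where it strictly dominates all other terms then yields disjointly supported functions,
at distance from `φ (m n)` at most the sum of its overlaps with the others.
-/

open MeasureTheory Filter Complex ComplexConjugate
open scoped ENNReal

lemma min_le_two_mul_add_sub_of_sq_le {x y z : ℝ} (hx : 0 ≤ x) (hy : 0 ≤ y)
    (h : z ^ 2 ≤ x ^ 2 + y ^ 2 - x * y) : min x y ≤ 2 * (x + y - z) := by
  rcases le_total x y with hxy | hxy
  · rw [min_eq_left hxy]
    nlinarith [sq_nonneg (x + y - x / 2 - z), sq_nonneg (x + y - x / 2 + z)]
  · rw [min_eq_right hxy]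
    nlinarith [sq_nonneg (x + y - y / 2 - z), sq_nonneg (x + y - y / 2 + z)]

lemma Complex.norm_add_sq_eq (a b : ℂ) :
    ‖a + b‖ ^ 2 = ‖a‖ ^ 2 + ‖b‖ ^ 2 + 2 * (a * conj b).re := by
  simp only [← normSq_eq_norm_sq, normSq_add]

lemma Complex.exists_norm_add_I_pow_mul_sq_le (a b : ℂ) :
    ∃ k < 4, ‖a + I ^ k • b‖ ^ 2 ≤ ‖a‖ ^ 2 + ‖b‖ ^ 2 - ‖a‖ * ‖b‖ := by
  set w := a * conj b
  have hw : ‖a‖ * ‖b‖ ≤ |w.re| + |w.im| := by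
    simpa [w] using Complex.norm_le_abs_re_add_abs_im w
  have key : ∀ k, ‖a + I ^ k • b‖ ^ 2 = ‖a‖ ^ 2 + ‖b‖ ^ 2 + 2 * (conj I ^ k * w).re := by
    intro k
    rw [smul_eq_mul, Complex.norm_add_sq_eq, norm_mul, norm_pow, norm_I, one_pow, one_mul,
      map_mul, map_pow, mul_left_comm]
  suffices ∃ k < 4, 2 * (conj I ^ k * w).re ≤ -(|w.re| + |w.im|) by
    obtain ⟨k, hk, hle⟩ := this
    exact ⟨k, hk, by rw [key]; linarith⟩
  obtain ⟨h0, h1, h2, h3⟩ : (conj I ^ 0 * w).re = w.re ∧ (conj I ^ 1 * w).re = w.im ∧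
      (conj I ^ 2 * w).re = -w.re ∧ (conj I ^ 3 * w).re = -w.im := by
    simp [pow_succ]
  rcases le_total |w.im| |w.re| with h | h <;>
    [rcases le_total w.re 0 with hs | hs; rcases le_total w.im 0 with hs | hs]
  · exact ⟨0, by norm_num, by rw [h0]; linarith [abs_of_nonpos hs]⟩
  · exact ⟨2, by norm_num, by rw [h2]; linarith [abs_of_nonneg hs]⟩
  · exact ⟨1, by norm_num, by rw [h1]; linarith [abs_of_nonpos hs]⟩
  · exact ⟨3, by norm_num, by rw [h3]; linarith [abs_of_nonneg hs]⟩

lemma Complex.min_norm_le_two_mul_sum_I_pow (a b : ℂ) :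
    min ‖a‖ ‖b‖ ≤ 2 * ∑ k ∈ Finset.range 4, (‖a‖ + ‖I ^ k • b‖ - ‖a + I ^ k • b‖) := by
  have hrot : ∀ k : ℕ, ‖I ^ k • b‖ = ‖b‖ := by simp
  obtain ⟨k, hk, hsq⟩ := exists_norm_add_I_pow_mul_sq_le a b
  have hgap : min ‖a‖ ‖b‖ ≤ 2 * (‖a‖ + ‖I ^ k • b‖ - ‖a + I ^ k • b‖) := by
    rw [hrot]
    exact min_le_two_mul_add_sub_of_sq_le (norm_nonneg _) (norm_nonneg _) hsq
  refine hgap.trans (mul_le_mul_of_nonneg_left ?_ zero_le_two)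
  refine Finset.single_le_sum (f := fun j => ‖a‖ + ‖I ^ j • b‖ - ‖a + I ^ j • b‖)
    (fun j _ => ?_) (Finset.mem_range.2 hk)
  linarith [norm_add_le a (I ^ j • b)]

lemma Finset.sum_min_le_add_sum_offDiag {ι : Type*} [DecidableEq ι] (s : Finset ι) (a : ι → ℝ)
    {b : ℝ} (ha : ∀ i, 0 ≤ a i) (hb : 0 ≤ b) :
    ∑ i ∈ s, min (a i) b ≤ b + ∑ p ∈ s.offDiag, min (a p.1) (a p.2) := by
  rcases s.eq_empty_or_nonempty with rfl | hs
  · simp [hb]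
  -- compare every other term with the largest `a i₀`
  obtain ⟨i₀, hi₀, hmax⟩ := s.exists_max_image a hs
  have hrest : ∑ i ∈ s.erase i₀, min (a i) b ≤ ∑ p ∈ s.offDiag, min (a p.1) (a p.2) :=
    calc ∑ i ∈ s.erase i₀, min (a i) b
        ≤ ∑ i ∈ s.erase i₀, min (a i) (a i₀) :=
          Finset.sum_le_sum fun i hi => by
            simp [min_eq_left (hmax i (Finset.mem_of_mem_erase hi))]
      _ = ∑ p ∈ (s.erase i₀).image (·, i₀), min (a p.1) (a p.2) := by
          rw [Finset.sum_image fun _ _ _ _ h => (Prod.mk.inj h).1]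
      _ ≤ ∑ p ∈ s.offDiag, min (a p.1) (a p.2) := by
          refine Finset.sum_le_sum_of_subset_of_nonneg ?_ fun p _ _ => le_min (ha _) (ha _)
          intro p hp
          obtain ⟨i, hi, rfl⟩ := Finset.mem_image.1 hp
          exact Finset.mem_offDiag.2
            ⟨Finset.mem_of_mem_erase hi, hi₀, Finset.ne_of_mem_erase hi⟩
  rw [← Finset.add_sum_erase s _ hi₀]
  linarith [min_le_right (a i₀) b]

lemma tendsto_zero_of_sum_le_add_sum_offDiag {v : ℕ → ℝ} {w : ℕ → ℕ → ℝ} {C : ℝ}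
    (hv : ∀ n, 0 ≤ v n)
    (hsum : ∀ s : Finset ℕ, ∑ i ∈ s, v i ≤ C + ∑ p ∈ s.offDiag, w p.1 p.2)
    (hw : ∀ ε > 0, ∃ M, ∀ i j, M ≤ i → M ≤ j → i ≠ j → w i j ≤ ε) :
    Tendsto v atTop (nhds 0) := by
  refine Metric.tendsto_atTop.2 fun ε hε => ?_
  by_contra! hbad
  have hfreq : ∃ᶠ n in atTop, ε ≤ v n := frequently_atTop.2 fun N => by
    obtain ⟨n, hn, hvn⟩ := hbad N
    exact ⟨n, hn, by simpa [Real.dist_eq, abs_of_nonneg (hv n)] using hvn⟩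
  -- `N` terms of size `≥ ε` whose pairwise interactions are `≤ ε / (2N)` force `N ε ≤ 2C`
  have hC : 0 ≤ C := by simpa using hsum ∅
  obtain ⟨N, hN⟩ := exists_nat_gt (2 * C / ε)
  have hNpos : 0 < (N : ℝ) := lt_of_le_of_lt (by positivity) hN
  obtain ⟨M, hM⟩ := hw (ε / (2 * N)) (by positivity)
  obtain ⟨s, hsub, hcard⟩ := (Nat.frequently_atTop_iff_infinite.1
    (hfreq.and_eventually (eventually_ge_atTop M))).exists_subset_card_eq N
  have hlow : N * ε ≤ ∑ i ∈ s, v i := by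
    simpa [hcard] using Finset.card_nsmul_le_sum s v ε fun i hi => (hsub hi).1
  have hoff : ∑ p ∈ s.offDiag, w p.1 p.2 ≤ N * ε / 2 := by
    have hcard_off : (s.offDiag.card : ℝ) ≤ N * N := by
      rw [← hcard]; exact_mod_cast (Finset.offDiag_card s).le.trans (Nat.sub_le _ _)
    calc ∑ p ∈ s.offDiag, w p.1 p.2 ≤ s.offDiag.card • (ε / (2 * N)) :=
          Finset.sum_le_card_nsmul _ _ _ fun p hp => by
            obtain ⟨h1, h2, h12⟩ := Finset.mem_offDiag.1 hp
            exact hM _ _ (hsub h1).2 (hsub h2).2 h12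
      _ ≤ (N * N) * (ε / (2 * N)) := by
          rw [nsmul_eq_mul]; gcongr
      _ = N * ε / 2 := by field_simp
  have := (div_lt_iff₀ hε).1 hN
  linarith [hsum s]

lemma Filter.exists_strictMono_forall_lt_of_eventually {P : ℕ → ℕ → ℕ → Prop}
    (hP : ∀ n k, ∀ᶠ i in atTop, P n i k) :
    ∃ m : ℕ → ℕ, StrictMono m ∧ ∀ k n, k < n → P n (m n) (m k) := by
  have hnext : ∀ n p, ∃ i, p < i ∧ ∀ k ≤ p, P n i k := fun n p =>
    ((eventually_gt_atTop p).and ((Set.finite_Iic p).eventually_all.2 fun k _ => hP n k)).exists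
  choose next hnext_gt hnext_P using hnext
  let m : ℕ → ℕ := fun n => Nat.rec 0 (fun n p => next (n + 1) p) n
  have hm : StrictMono m := strictMono_nat_of_lt_succ fun n => hnext_gt (n + 1) (m n)
  refine ⟨m, hm, fun k n hkn => ?_⟩
  obtain ⟨n, rfl⟩ := Nat.exists_eq_add_of_le' (Nat.one_le_of_lt hkn)
  exact hnext_P (n + 1) (m n) (m k) (hm.monotone (Nat.lt_succ_iff.1 hkn))

namespace MeasureTheory.L1

variable {Ω E : Type*} [MeasurableSpace Ω] {μ : Measure Ω} [NormedAddCommGroup E]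

/-- Measures how far `f` and `g` are from having a.e. disjoint supports. -/
noncomputable def overlap (f g : Lp E 1 μ) : ℝ := ∫ x, min ‖f x‖ ‖g x‖ ∂μ

lemma integrable_min_norm (f g : Lp E 1 μ) : Integrable (fun x => min ‖f x‖ ‖g x‖) μ :=
  (L1.integrable_coeFn f).norm.inf (L1.integrable_coeFn g).norm

lemma overlap_comm (f g : Lp E 1 μ) : overlap f g = overlap g f := by
  simp only [overlap, min_comm]

lemma overlap_nonneg (f g : Lp E 1 μ) : 0 ≤ overlap f g :=
  integral_nonneg fun _ => le_min (norm_nonneg _) (norm_nonneg _)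

lemma ofReal_overlap (f g : Lp E 1 μ) :
    ENNReal.ofReal (overlap f g) = ∫⁻ x, min ‖f x‖ₑ ‖g x‖ₑ ∂μ := by
  rw [overlap, ofReal_integral_eq_lintegral_ofReal (integrable_min_norm f g)
    (ae_of_all _ fun _ => le_min (norm_nonneg _) (norm_nonneg _))]
  simp only [ENNReal.ofReal_min, ofReal_norm]

lemma integrable_norm_add_norm_sub_norm_add (f g : Lp E 1 μ) :
    Integrable (fun x => ‖f x‖ + ‖g x‖ - ‖f x + g x‖) μ :=
  ((L1.integrable_coeFn f).norm.add (L1.integrable_coeFn g).norm).sub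
    ((L1.integrable_coeFn (f + g)).congr (Lp.coeFn_add f g)).norm

lemma integral_norm_add_norm_sub_norm_add (f g : Lp E 1 μ) :
    ∫ x, (‖f x‖ + ‖g x‖ - ‖f x + g x‖) ∂μ = ‖f‖ + ‖g‖ - ‖f + g‖ := by
  have hf := (L1.integrable_coeFn f).norm
  have hg := (L1.integrable_coeFn g).norm
  have hsum : Integrable (fun x => ‖f x‖ + ‖g x‖) μ := hf.add hg
  have hadd : Integrable (fun x => ‖f x + g x‖) μ :=
    ((L1.integrable_coeFn (f + g)).congr (Lp.coeFn_add f g)).norm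
  have hnorm_add : ∫ x, ‖f x + g x‖ ∂μ = ‖f + g‖ := by
    rw [L1.norm_eq_integral_norm]
    exact integral_congr_ae ((Lp.coeFn_add f g).mono fun x hx => by simp only [hx, Pi.add_apply])
  rw [MeasureTheory.integral_sub hsum hadd, MeasureTheory.integral_add hf hg, hnorm_add,
    L1.norm_eq_integral_norm f, L1.norm_eq_integral_norm g]

lemma sum_overlap_le_add_sum_offDiag {ι : Type*} [DecidableEq ι] (s : Finset ι)
    (f : ι → Lp E 1 μ) (g : Lp E 1 μ) :
    ∑ i ∈ s, overlap (f i) g ≤ ‖g‖ + ∑ p ∈ s.offDiag, overlap (f p.1) (f p.2) := by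
  have hg := (L1.integrable_coeFn g).norm
  have hoff := integrable_finsetSum s.offDiag fun p _ => integrable_min_norm (f p.1) (f p.2)
  have hbound : Integrable
      (fun x => ‖g x‖ + ∑ p ∈ s.offDiag, min ‖f p.1 x‖ ‖f p.2 x‖) μ := hg.add hoff
  have h := integral_mono (integrable_finsetSum s fun i _ => integrable_min_norm (f i) g)
    hbound fun x => Finset.sum_min_le_add_sum_offDiag s (fun i => ‖f i x‖)
      (fun _ => norm_nonneg _) (norm_nonneg _)
  rwa [MeasureTheory.integral_add hg hoff,
    integral_finsetSum _ fun i _ => integrable_min_norm (f i) g,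
    integral_finsetSum _ fun p _ => integrable_min_norm (f p.1) (f p.2),
    ← L1.norm_eq_integral_norm] at h

lemma exists_ae_disjoint_enorm_sub_le (f : ℕ → Lp E 1 μ) :
    ∃ ψ : ℕ → Lp E 1 μ, (∀ n k, n ≠ k → ∀ᵐ x ∂μ, ψ n x = 0 ∨ ψ k x = 0) ∧
      ∀ n, ‖f n - ψ n‖ₑ ≤ ∑' k : {k // k ≠ n}, ∫⁻ x, min ‖f n x‖ₑ ‖f k x‖ₑ ∂μ := by
  set A : ℕ → Set Ω := fun n => ⋂ (k) (_ : k ≠ n), {x | ‖f k x‖ₑ < ‖f n x‖ₑ}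
  have hA : ∀ n, MeasurableSet (A n) := fun n =>
    MeasurableSet.iInter fun k => MeasurableSet.iInter fun _ =>
      measurableSet_lt (Lp.stronglyMeasurable _).enorm (Lp.stronglyMeasurable _).enorm
  have hmem : ∀ n, MemLp ((A n).indicator (f n)) 1 μ := fun n => (Lp.memLp (f n)).indicator (hA n)
  refine ⟨fun n => (hmem n).toLp, fun n k hnk => ?_, fun n => ?_⟩
  · filter_upwards [(hmem n).coeFn_toLp, (hmem k).coeFn_toLp] with x hn hk
    rw [hn, hk]
    by_contra! h
    have hxn := Set.mem_iInter₂.1 (Set.mem_of_indicator_ne_zero h.1) k hnk.symm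
    have hxk := Set.mem_iInter₂.1 (Set.mem_of_indicator_ne_zero h.2) n hnk
    exact lt_asymm (Set.mem_ofPred.1 hxn) (Set.mem_ofPred.1 hxk)
  · have hsub : ⇑(f n - (hmem n).toLp) =ᵐ[μ] (A n)ᶜ.indicator (f n) := by
      filter_upwards [Lp.coeFn_sub (f n) (hmem n).toLp, (hmem n).coeFn_toLp] with x hx hψ
      rw [hx, Pi.sub_apply, hψ, Set.indicator_compl, Pi.sub_apply]
    have hpt : ∀ x, ‖(A n)ᶜ.indicator (f n) x‖ₑ
        ≤ ∑' k : {k // k ≠ n}, min ‖f n x‖ₑ ‖f k x‖ₑ := by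
      intro x
      by_cases hx : x ∈ A n
      · simp [hx]
      obtain ⟨k, hk, hle⟩ : ∃ k, k ≠ n ∧ ‖f n x‖ₑ ≤ ‖f k x‖ₑ := by
        simpa [A] using hx
      rw [Set.indicator_of_mem hx]
      exact (min_eq_left hle).ge.trans
        (ENNReal.le_tsum (f := fun k : {k // k ≠ n} => min ‖f n x‖ₑ ‖f k x‖ₑ) ⟨k, hk⟩)
    calc ‖f n - (hmem n).toLp‖ₑ = ∫⁻ x, ‖(A n)ᶜ.indicator (f n) x‖ₑ ∂μ := by
          rw [Lp.enorm_def, eLpNorm_congr_ae hsub, eLpNorm_one_eq_lintegral_enorm]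
      _ ≤ ∫⁻ x, ∑' k : {k // k ≠ n}, min ‖f n x‖ₑ ‖f k x‖ₑ ∂μ := lintegral_mono hpt
      _ = ∑' k : {k // k ≠ n}, ∫⁻ x, min ‖f n x‖ₑ ‖f k x‖ₑ ∂μ :=
          lintegral_tsum fun k => ((Lp.stronglyMeasurable _).enorm.min
            (Lp.stronglyMeasurable _).enorm).aemeasurable

lemma exists_ae_disjoint_norm_sub_le (f : ℕ → Lp E 1 μ) {b : ℕ → ℝ} (hb : ∀ n, 0 ≤ b n)
    (hbs : Summable b) (hf : ∀ n k, n ≠ k → overlap (f n) (f k) ≤ b n * b k) :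
    ∃ ψ : ℕ → Lp E 1 μ, (∀ n k, n ≠ k → ∀ᵐ x ∂μ, ψ n x = 0 ∨ ψ k x = 0) ∧
      ∀ n, ‖f n - ψ n‖ ≤ b n * ∑' k, b k := by
  obtain ⟨ψ, hψ, hdist⟩ := exists_ae_disjoint_enorm_sub_le f
  refine ⟨ψ, hψ, fun n => ?_⟩
  rw [← toReal_enorm, ← tsum_mul_left]
  refine ENNReal.toReal_le_of_le_ofReal (tsum_nonneg fun k => mul_nonneg (hb n) (hb k)) ?_
  calc ‖f n - ψ n‖ₑ ≤ ∑' k : {k // k ≠ n}, ∫⁻ x, min ‖f n x‖ₑ ‖f k x‖ₑ ∂μ := hdist n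
    _ ≤ ∑' k : {k // k ≠ n}, ENNReal.ofReal (b n * b k) := ENNReal.tsum_le_tsum fun k => by
        rw [← ofReal_overlap]
        exact ENNReal.ofReal_le_ofReal (hf n k k.2.symm)
    _ ≤ ∑' k, ENNReal.ofReal (b n * b k) :=
        ENNReal.tsum_comp_le_tsum_of_injective Subtype.val_injective _
    _ = ENNReal.ofReal (∑' k, b n * b k) :=
        (ENNReal.ofReal_tsum_of_nonneg (fun k => mul_nonneg (hb n) (hb k)) (hbs.mul_left _)).symm

end MeasureTheory.L1

/-- `(φ n)_{n ≥ m}` is a `(1 - δ m)`-lower `ℓ¹` sequence for every `m`; the sequence spans `ℓ¹`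
almost isometrically when moreover `δ → 0`. -/
def HasLowerL1Estimate (𝕜 : Type*) {E : Type*} [NormedField 𝕜] [SeminormedAddCommGroup E]
    [Module 𝕜 E] (φ : ℕ → E) (δ : ℕ → ℝ) : Prop :=
  ∀ m : ℕ, ∀ s : Finset ℕ, ∀ α : ℕ → 𝕜, (∀ n ∈ s, m ≤ n) →
    (1 - δ m) * ∑ n ∈ s, ‖α n‖ ≤ ‖∑ n ∈ s, α n • φ n‖

namespace HasLowerL1Estimate

lemma mul_add_le_norm_smul_add_smul {𝕜 E : Type*} [NormedField 𝕜] [SeminormedAddCommGroup E]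
    [Module 𝕜 E] {φ : ℕ → E} {δ : ℕ → ℝ} (h : HasLowerL1Estimate 𝕜 φ δ) {m i j : ℕ}
    (hij : i ≠ j) (hi : m ≤ i) (hj : m ≤ j) (a b : 𝕜) :
    (1 - δ m) * (‖a‖ + ‖b‖) ≤ ‖a • φ i + b • φ j‖ := by
  simpa [Finset.sum_pair hij, hij.symm] using
    h m {i, j} (fun n => if n = i then a else b) (by simp [hi, hj])

open Complex L1

variable {Ω : Type*} [MeasurableSpace Ω] {μ : Measure Ω} {φ : ℕ → Lp ℂ 1 μ} {δ : ℕ → ℝ}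

lemma overlap_le (h : HasLowerL1Estimate ℂ φ δ) (hnorm : ∀ n, ‖φ n‖ = 1) {m i j : ℕ}
    (hij : i ≠ j) (hi : m ≤ i) (hj : m ≤ j) : overlap (φ i) (φ j) ≤ 16 * δ m := by
  have hgap : ∀ θ : ℂ, ‖θ‖ = 1 →
      ∫ x, (‖φ i x‖ + ‖(θ • φ j) x‖ - ‖φ i x + (θ • φ j) x‖) ∂μ ≤ 2 * δ m := by
    intro θ hθ
    have := h.mul_add_le_norm_smul_add_smul hij hi hj 1 θ
    rw [one_smul, norm_one, hθ] at this
    rw [integral_norm_add_norm_sub_norm_add, norm_smul, hθ, hnorm, hnorm]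
    linarith
  have hrot : ∀ᵐ x ∂μ, ∀ k : ℕ, (I ^ k • φ j) x = I ^ k • φ j x :=
    ae_all_iff.2 fun k => Lp.coeFn_smul _ _
  calc overlap (φ i) (φ j)
      ≤ ∫ x, 2 * ∑ k ∈ Finset.range 4,
          (‖φ i x‖ + ‖(I ^ k • φ j) x‖ - ‖φ i x + (I ^ k • φ j) x‖) ∂μ :=
        integral_mono_ae (integrable_min_norm _ _)
          ((integrable_finsetSum _ fun _ _ =>
            integrable_norm_add_norm_sub_norm_add _ _).const_mul 2)
          (hrot.mono fun x hx => by simpa only [hx] using min_norm_le_two_mul_sum_I_pow _ _)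
    _ = 2 * ∑ k ∈ Finset.range 4,
          ∫ x, (‖φ i x‖ + ‖(I ^ k • φ j) x‖ - ‖φ i x + (I ^ k • φ j) x‖) ∂μ := by
        rw [integral_const_mul,
          integral_finsetSum _ fun k _ => integrable_norm_add_norm_sub_norm_add _ _]
    _ ≤ 2 * ∑ k ∈ Finset.range 4, 2 * δ m := by
        gcongr with k
        exact hgap _ (by simp)
    _ = 16 * δ m := by rw [Finset.sum_const, Finset.card_range, nsmul_eq_mul]; ring

lemma tendsto_overlap (h : HasLowerL1Estimate ℂ φ δ) (hnorm : ∀ n, ‖φ n‖ = 1)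
    (hδ : Tendsto δ atTop (nhds 0)) (k : ℕ) :
    Tendsto (fun n => overlap (φ n) (φ k)) atTop (nhds 0) :=
  tendsto_zero_of_sum_le_add_sum_offDiag (fun _ => overlap_nonneg _ _)
    (fun s => sum_overlap_le_add_sum_offDiag s φ (φ k)) fun ε hε => by
      obtain ⟨M, hM⟩ := (hδ.eventually (eventually_le_nhds (by positivity : 0 < ε / 16))).exists
      exact ⟨M, fun i j hi hj hij => (h.overlap_le hnorm hij hi hj).trans (by linarith)⟩

end HasLowerL1Estimate

theorem l1_almost_isometric_perturbation_of_orthogonal_L1_general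
    {Ω : Type*} [MeasurableSpace Ω] (μ : Measure Ω)
    (φ : ℕ → Lp ℂ 1 μ) (hnorm : ∀ m, ‖φ m‖ = 1)
    (δ : ℕ → ℝ) (hδ : Tendsto δ atTop (nhds 0))
    (hspan : ∀ m : ℕ, ∀ s : Finset ℕ, ∀ α : ℕ → ℂ, (∀ n ∈ s, m ≤ n) →
      (1 - δ m) * ∑ n ∈ s, ‖α n‖ ≤ ‖∑ n ∈ s, α n • φ n‖) :
    ∃ m : ℕ → ℕ, StrictMono m ∧
      ∃ ψ : ℕ → Lp ℂ 1 μ,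
        (∀ n k, n ≠ k → ∀ᵐ x ∂μ, (ψ n) x * (ψ k) x = 0) ∧
        Tendsto (fun n => ‖φ (m n) - ψ n‖) atTop (nhds 0) := by
  have hl1 : HasLowerL1Estimate ℂ φ δ := hspan
  set b : ℕ → ℝ := fun n => (1 / 2) ^ n
  obtain ⟨m, hm, hmb⟩ := exists_strictMono_forall_lt_of_eventually fun n k =>
    (hl1.tendsto_overlap hnorm hδ k).eventually
      (eventually_le_nhds (by positivity : 0 < b n * b n))
  have hsep : ∀ n k, n ≠ k → L1.overlap (φ (m n)) (φ (m k)) ≤ b n * b k := by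
    have hb : Antitone b := fun i j hij => pow_le_pow_of_le_one (by norm_num) (by norm_num) hij
    intro n k hnk
    rcases hnk.lt_or_gt with hlt | hgt
    · rw [L1.overlap_comm, mul_comm]
      exact (hmb n k hlt).trans (mul_le_mul_of_nonneg_left (hb hlt.le) (by positivity))
    · exact (hmb k n hgt).trans (mul_le_mul_of_nonneg_left (hb hgt.le) (by positivity))
  obtain ⟨ψ, hψ, hdist⟩ := L1.exists_ae_disjoint_norm_sub_le (fun n => φ (m n))
    (fun n => by positivity) summable_geometric_two hsep
  refine ⟨m, hm, ψ, fun n k hnk => (hψ n k hnk).mono fun x hx => mul_eq_zero.2 hx,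
    squeeze_zero (fun _ => norm_nonneg _) hdist ?_⟩
  rw [show ∑' k, b k = 2 from tsum_geometric_two]
  simpa using (tendsto_pow_atTop_nhds_zero_of_lt_one (r := (1 / 2 : ℝ)) (by norm_num)
    (by norm_num)).mul_const 2

/-- Commutative instance of the theorem on infinite `ℓ₁`-copies in preduals
of JBW*-triples: if a normalized sequence `(φ_m)` in `L¹(μ, ℂ)` (over a σ-finite measure)
spans `ℓ₁` almost isometrically, then there are a subsequence `(φ_{m_n})` and a pairwise
a.e. orthogonal sequence `(φ̃_n)` in `L¹(μ, ℂ)` with `‖φ_{m_n} - φ̃_n‖₁ → 0`. -/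
theorem l1_almost_isometric_perturbation_of_orthogonal_L1
    {Ω : Type*} [MeasurableSpace Ω] (μ : Measure Ω) [SigmaFinite μ]
    (φ : ℕ → Lp ℂ 1 μ) (hnorm : ∀ m, ‖φ m‖ = 1)
    (δ : ℕ → ℝ) (hδ0 : ∀ m, 0 ≤ δ m) (hδ : Tendsto δ atTop (nhds 0))
    (hspan : ∀ m : ℕ, ∀ s : Finset ℕ, ∀ α : ℕ → ℂ, (∀ n ∈ s, m ≤ n) →
      (1 - δ m) * ∑ n ∈ s, ‖α n‖ ≤ ‖∑ n ∈ s, α n • φ n‖) :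
    ∃ m : ℕ → ℕ, StrictMono m ∧
      ∃ ψ : ℕ → Lp ℂ 1 μ,
        (∀ n k, n ≠ k → ∀ᵐ x ∂μ, (ψ n) x * (ψ k) x = 0) ∧
        Tendsto (fun n => ‖φ (m n) - ψ n‖) atTop (nhds 0) :=
  l1_almost_isometric_perturbation_of_orthogonal_L1_general μ φ hnorm δ hδ hspan
end

section
/- Let A be a C*-algebra, let s, t ≥ 0, let (c_n)_{n∈ℕ} be a sequence of pairwise orthogonal elements of A (c_n·c_k* = 0 and c_k*·c_n = 0 for n ≠ k) with ‖c_n‖ = 1 for all n, and let (φ_n)_{n∈ℕ} be continuous linear functionals on A with ‖φ_n‖ ≤ 1, Re φ_n(c_n) ≥ s for all n, and ∑_{k∈F} |φ_n(c_k)| ≤ t for every n and every finite set F ⊆ ℕ with n ∉ F. Then for every finitely supported family of complex scalars (α_n) one has ‖∑_n α_n φ_n‖ ≥ (s − t) ∑_n |α_n|; moreover the witnessing element can be taken in the closed linear span of {c_k : k ∈ ℕ}: there is c in that span with ‖c‖ ≤ 1 and Re ∑_n α_n φ_n(c) ≥ (s − t) ∑_n |α_n|. -/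
/-! If the `a i` are pairwise orthogonal, then `(∑ a i)⋆ (∑ a i) = ∑ (a i)⋆ a i` and the family
`(a i)⋆ a i` is again pairwise orthogonal. Iterating the C⋆-identity `‖y‖ ^ 2 = ‖y⋆ y‖` thus gives
`‖∑ a i‖ ^ 2 ^ m ≤ #s` for every `m` when all `‖a i‖ ≤ 1`, so `‖∑ a i‖ ≤ 1`.

Choosing unimodular `β k` with `α k * β k = ‖α k‖`, the element `x = ∑ β k • c k` lies in the unit
ball, and `Re (α n * φ n x)` is `‖α n‖ * Re (φ n (c n))` up to an error of norm at most `‖α n‖ * t`.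
-/

open Finset

/-- Orthogonality `L(a, b) = 0` of the JB⋆-triple structure, in its C⋆-algebra form. -/
def StarOrthogonal {E : Type*} [Mul E] [Star E] [Zero E] (a b : E) : Prop :=
  a * star b = 0 ∧ star b * a = 0

namespace StarOrthogonal

variable {E : Type*} [NonUnitalRing E] [StarRing E] {a b : E}

theorem symm (h : StarOrthogonal a b) : StarOrthogonal b a :=
  ⟨by simpa using congrArg star h.1, by simpa using congrArg star h.2⟩

theorem star_mul_self (h : StarOrthogonal a b) :
    StarOrthogonal (star a * a) (star b * b) := by
  refine ⟨?_, ?_⟩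
  · simp [mul_assoc, ← mul_assoc a, h.1]
  · simp [mul_assoc, ← mul_assoc b, h.symm.1]

theorem smul {R : Type*} [CommSemiring R] [StarRing R] [Module R E] [StarModule R E]
    [IsScalarTower R E E] [SMulCommClass R E E] (h : StarOrthogonal a b) (r r' : R) :
    StarOrthogonal (r • a) (r' • b) := by
  refine ⟨?_, ?_⟩
  · rw [star_smul, smul_mul_smul_comm, h.1, smul_zero]
  · rw [star_smul, smul_mul_smul_comm, h.2, smul_zero]

end StarOrthogonal

section
variable {E ι : Type*} [NonUnitalRing E] [StarRing E]

theorem star_sum_mul_sum_of_pairwise_starOrthogonal {s : Finset ι} {a : ι → E}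
    (h : (s : Set ι).Pairwise fun i j => StarOrthogonal (a i) (a j)) :
    star (∑ i ∈ s, a i) * ∑ i ∈ s, a i = ∑ i ∈ s, star (a i) * a i := by
  rw [star_sum, sum_mul_sum]
  refine sum_congr rfl fun i hi => sum_eq_single_of_mem i hi fun j hj hji => ?_
  exact (h hj hi hji).2
end

theorem le_one_of_forall_pow_two_pow_le {r C : ℝ} (h : ∀ m : ℕ, r ^ 2 ^ m ≤ C) : r ≤ 1 := by
  by_contra! hr
  obtain ⟨m, hm⟩ := pow_unbounded_of_one_lt C hr
  exact (hm.trans_le ((pow_le_pow_right₀ hr.le m.lt_two_pow_self.le).trans (h m))).false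

section
variable {E ι : Type*} [NonUnitalNormedRing E] [StarRing E] [CStarRing E]

theorem norm_sum_pow_two_pow_le_card_of_pairwise_starOrthogonal (m : ℕ) {s : Finset ι}
    {a : ι → E} (h : (s : Set ι).Pairwise fun i j => StarOrthogonal (a i) (a j))
    (ha : ∀ i ∈ s, ‖a i‖ ≤ 1) : ‖∑ i ∈ s, a i‖ ^ 2 ^ m ≤ (#s : ℝ) := by
  induction m generalizing a with
  | zero =>
    calc ‖∑ i ∈ s, a i‖ ^ 2 ^ 0 ≤ ∑ i ∈ s, ‖a i‖ := by simpa using norm_sum_le s a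
      _ ≤ ∑ i ∈ s, 1 := sum_le_sum ha
      _ = (#s : ℝ) := by simp
  | succ m ih =>
    have h' : (s : Set ι).Pairwise fun i j =>
        StarOrthogonal (star (a i) * a i) (star (a j) * a j) :=
      fun i hi j hj hij => (h hi hj hij).star_mul_self
    have ha' : ∀ i ∈ s, ‖star (a i) * a i‖ ≤ 1 := fun i hi => by
      rw [CStarRing.norm_star_mul_self]
      exact mul_le_one₀ (ha i hi) (norm_nonneg _) (ha i hi)
    calc ‖∑ i ∈ s, a i‖ ^ 2 ^ (m + 1) = ‖star (∑ i ∈ s, a i) * ∑ i ∈ s, a i‖ ^ 2 ^ m := by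
          rw [CStarRing.norm_star_mul_self, pow_succ', pow_mul, sq]
      _ ≤ (#s : ℝ) := by
          rw [star_sum_mul_sum_of_pairwise_starOrthogonal h]
          exact ih h' ha'

theorem norm_sum_le_one_of_pairwise_starOrthogonal {s : Finset ι} {a : ι → E}
    (h : (s : Set ι).Pairwise fun i j => StarOrthogonal (a i) (a j))
    (ha : ∀ i ∈ s, ‖a i‖ ≤ 1) : ‖∑ i ∈ s, a i‖ ≤ 1 :=
  le_one_of_forall_pow_two_pow_le fun m =>
    norm_sum_pow_two_pow_le_card_of_pairwise_starOrthogonal m h ha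
end

theorem Complex.exists_norm_eq_one_mul_eq_norm (z : ℂ) : ∃ w : ℂ, ‖w‖ = 1 ∧ z * w = ‖z‖ := by
  refine ⟨exp (-(arg z * I)), by simpa using norm_exp_ofReal_mul_I (-arg z), ?_⟩
  calc z * exp (-(arg z * I)) = ‖z‖ * exp (arg z * I) * exp (-(arg z * I)) := by
        rw [norm_mul_exp_arg_mul_I]
    _ = ‖z‖ := by rw [mul_assoc, ← exp_add, add_neg_cancel, exp_zero, mul_one]

theorem sub_mul_norm_le_re_mul_apply_sum {E ι : Type*} [AddCommGroup E] [Module ℂ E]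
    [DecidableEq ι] (f : E →ₗ[ℂ] ℂ) {c : ι → E} {β : ι → ℂ} (hβ : ∀ k, ‖β k‖ ≤ 1) {s t : ℝ}
    {F : Finset ι} {n : ι} (hn : n ∈ F) {a : ℂ} (ha : a * β n = ‖a‖) (hre : s ≤ (f (c n)).re)
    (hsum : ∑ k ∈ F.erase n, ‖f (c k)‖ ≤ t) :
    (s - t) * ‖a‖ ≤ (a * f (∑ k ∈ F, β k • c k)).re := by
  set err := ∑ k ∈ F.erase n, a * β k * f (c k)
  have hsplit : a * f (∑ k ∈ F, β k • c k) = ‖a‖ * f (c n) + err := by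
    rw [← add_sum_erase F _ hn, map_add, map_sum, mul_add, mul_sum]
    simp only [map_smul, smul_eq_mul, ← mul_assoc, ha, err]
  have herr : ‖err‖ ≤ ‖a‖ * t :=
    calc ‖err‖ ≤ ∑ k ∈ F.erase n, ‖a * β k * f (c k)‖ := norm_sum_le _ _
      _ ≤ ∑ k ∈ F.erase n, ‖a‖ * ‖f (c k)‖ := sum_le_sum fun k _ => by
          rw [norm_mul, norm_mul]
          exact mul_le_mul_of_nonneg_right (mul_le_of_le_one_right (norm_nonneg a) (hβ k))
            (norm_nonneg _)
      _ ≤ ‖a‖ * t := by rw [← mul_sum]; exact mul_le_mul_of_nonneg_left hsum (norm_nonneg a)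
  calc (s - t) * ‖a‖ ≤ ‖a‖ * (f (c n)).re - ‖err‖ := by nlinarith [norm_nonneg a]
    _ ≤ (a * f (∑ k ∈ F, β k • c k)).re := by
        rw [hsplit, Complex.add_re, Complex.re_ofReal_mul]
        linarith [neg_le_of_abs_le (Complex.abs_re_le_norm err)]

theorem l1_lower_bound_from_orthogonal_elements_general
    {A : Type*} [NonUnitalCStarAlgebra A]
    (s t : ℝ)
    (c : ℕ → A)
    (horth : ∀ n k, n ≠ k → c n * star (c k) = 0 ∧ star (c k) * c n = 0)
    (hcnorm : ∀ n, ‖c n‖ = 1)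
    (φ : ℕ → A →L[ℂ] ℂ)
    (hre : ∀ n, s ≤ (φ n (c n)).re)
    (hsum : ∀ n : ℕ, ∀ F : Finset ℕ, n ∉ F → ∑ k ∈ F, ‖φ n (c k)‖ ≤ t) :
    ∀ F : Finset ℕ, ∀ α : ℕ → ℂ,
      (s - t) * ∑ n ∈ F, ‖α n‖ ≤ ‖∑ n ∈ F, α n • φ n‖ ∧
      ∃ x ∈ closure ((Submodule.span ℂ (Set.range c) : Submodule ℂ A) : Set A),
        ‖x‖ ≤ 1 ∧ (s - t) * ∑ n ∈ F, ‖α n‖ ≤ (∑ n ∈ F, α n * φ n x).re := by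
  intro F α
  choose β hβ hαβ using fun n => Complex.exists_norm_eq_one_mul_eq_norm (α n)
  set x := ∑ k ∈ F, β k • c k
  have hx_norm : ‖x‖ ≤ 1 :=
    norm_sum_le_one_of_pairwise_starOrthogonal
      (fun n _ k _ hnk => StarOrthogonal.smul (horth n k hnk) _ _)
      fun k _ => by rw [norm_smul, hβ, hcnorm, one_mul]
  have hx_mem : x ∈ closure ((Submodule.span ℂ (Set.range c) : Submodule ℂ A) : Set A) :=
    subset_closure <| Submodule.sum_mem _ fun k _ =>
      Submodule.smul_mem _ _ (Submodule.subset_span (Set.mem_range_self k))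
  have hkey : (s - t) * ∑ n ∈ F, ‖α n‖ ≤ (∑ n ∈ F, α n * φ n x).re := by
    rw [Complex.re_sum, mul_sum]
    exact sum_le_sum fun n hn => sub_mul_norm_le_re_mul_apply_sum (φ n : A →ₗ[ℂ] ℂ)
      (fun k => (hβ k).le) hn (hαβ n) (hre n) (hsum n _ (notMem_erase n F))
  refine ⟨hkey.trans ?_, x, hx_mem, hx_norm, hkey⟩
  have happly : (∑ n ∈ F, α n • φ n) x = ∑ n ∈ F, α n * φ n x := by simp
  calc (∑ n ∈ F, α n * φ n x).re ≤ ‖(∑ n ∈ F, α n • φ n) x‖ := happly ▸ Complex.re_le_norm _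
    _ ≤ ‖∑ n ∈ F, α n • φ n‖ := (∑ n ∈ F, α n • φ n).unit_le_opNorm x hx_norm

/-- The final estimate in the proof of the infinite `ℓ₁`-copies theorem:
if `(c_n)` are pairwise orthogonal norm-one elements of a C*-algebra `A` and `(φ_n)` are
functionals with `‖φ_n‖ ≤ 1`, `Re φ_n(c_n) ≥ s`, and `∑_{k ∈ F} |φ_n(c_k)| ≤ t` for every
`n` and finite `F` with `n ∉ F`, then `(φ_n)` spans `ℓ₁` `(s - t)`-isomorphically, with the
witnessing element taken in the closed linear span of the `c_k`. -/
theorem l1_lower_bound_from_orthogonal_elements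
    {A : Type*} [NonUnitalCStarAlgebra A]
    (s t : ℝ) (hs : 0 ≤ s) (ht : 0 ≤ t)
    (c : ℕ → A)
    (horth : ∀ n k, n ≠ k → c n * star (c k) = 0 ∧ star (c k) * c n = 0)
    (hcnorm : ∀ n, ‖c n‖ = 1)
    (φ : ℕ → A →L[ℂ] ℂ) (hφ : ∀ n, ‖φ n‖ ≤ 1)
    (hre : ∀ n, s ≤ (φ n (c n)).re)
    (hsum : ∀ n : ℕ, ∀ F : Finset ℕ, n ∉ F → ∑ k ∈ F, ‖φ n (c k)‖ ≤ t) :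
    ∀ F : Finset ℕ, ∀ α : ℕ → ℂ,
      (s - t) * ∑ n ∈ F, ‖α n‖ ≤ ‖∑ n ∈ F, α n • φ n‖ ∧
      ∃ x ∈ closure ((Submodule.span ℂ (Set.range c) : Submodule ℂ A) : Set A),
        ‖x‖ ≤ 1 ∧ (s - t) * ∑ n ∈ F, ‖α n‖ ≤ (∑ n ∈ F, α n * φ n x).re :=
  l1_lower_bound_from_orthogonal_elements_general s t c horth hcnorm φ hre hsum
end
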